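/- (Every n-queens solution in the representation is computed by NQUEENS.) Let n ≥ 1 and let cs, us, ds be ground terms such that (cs, us, ds) is correct up to n w.r.t. n. Then for every ground term t, the atom pqs(⌜n⌝, cs, us, cons t ds) belongs to the least Herbrand model M of NQUEENS. -/
import Mathlib


/-- Ground terms of the n-queens program. -/
inductive Term : Type where
  | zero : Term
  | succ : Term → Term
  | nil  : Term
  | cons : Term → Term → Term

/-- The numeral `⌜n⌝`: `succ` applied `n` times to `zero`. -/
def numeral : ℕ → Term
  | 0 => Term.zero
  | n + 1 => Term.succ (numeral n)

/-- `NthMember k e t`: `e` is the `k`-th member (`k ≥ 1`) of the term `t`. -/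
inductive NthMember : ℕ → Term → Term → Prop where
  | head (e t' : Term) : NthMember 1 e (Term.cons e t')
  | tail {k : ℕ} {e t' : Term} (e₁ : Term) :
      NthMember k e t' → NthMember (k + 1) e (Term.cons e₁ t')

/-- `e` is a member of `t`. -/
def IsMember (e t : Term) : Prop := ∃ k : ℕ, 1 ≤ k ∧ NthMember k e t

/-- `t` is a list of length `n`. -/
inductive ListOfLength : ℕ → Term → Prop where
  | nil : ListOfLength 0 Term.nil
  | cons {n : ℕ} {t : Term} (e : Term) :
      ListOfLength n t → ListOfLength (n + 1) (Term.cons e t)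

/-- `t` is a list (of some length). -/
def IsList (t : Term) : Prop := ∃ n : ℕ, ListOfLength n t

/-- `t` is a list of pairwise distinct members. -/
def DistinctList (t : Term) : Prop :=
  IsList t ∧
  ∀ (k k' : ℕ) (e e' : Term),
    NthMember k e t → NthMember k' e' t → k ≠ k' → e ≠ e'

/-- The triple `(cs, us, ds)` is correct up to `m` w.r.t. `i`
(`0 ≤ m ≤ i`).  The up-diagonal number of queen `j` sitting at the `k`-th
column is the integer `k + j - i`, the down-diagonal number is `k + i - j`. -/
def CorrectUpTo (m i : ℕ) (cs us ds : Term) : Prop :=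
  m ≤ i ∧
  DistinctList cs ∧
  (∀ j : ℕ, 1 ≤ j → j ≤ m → IsMember (numeral j) cs) ∧
  -- the up-diagonal numbers of 1,…,m are pairwise distinct
  (∀ j j' k k' : ℕ, 1 ≤ j → j ≤ m → 1 ≤ j' → j' ≤ m → j ≠ j' →
    NthMember k (numeral j) cs → NthMember k' (numeral j') cs →
    (k : ℤ) + j - i ≠ (k' : ℤ) + j' - i) ∧
  -- the down-diagonal numbers of 1,…,m are pairwise distinct
  (∀ j j' k k' : ℕ, 1 ≤ j → j ≤ m → 1 ≤ j' → j' ≤ m → j ≠ j' →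
    NthMember k (numeral j) cs → NthMember k' (numeral j') cs →
    (k : ℤ) + i - j ≠ (k' : ℤ) + i - j') ∧
  -- positive up-diagonal numbers are recorded in us
  (∀ j k l : ℕ, 1 ≤ j → j ≤ m → NthMember k (numeral j) cs →
    (l : ℤ) = (k : ℤ) + j - i → 0 < l → NthMember l (numeral j) us) ∧
  -- positive down-diagonal numbers are recorded in ds
  (∀ j k l : ℕ, 1 ≤ j → j ≤ m → NthMember k (numeral j) cs →
    (l : ℤ) = (k : ℤ) + i - j → 0 < l → NthMember l (numeral j) ds)

/-- Ground atoms. -/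
inductive Atom : Type where
  | pq  : Term → Term → Term → Term → Atom
  | pqs : Term → Term → Term → Term → Atom

/-- `S` is an (Herbrand) model of the ground definite program `P`:
for every clause `(H, B) ∈ P` whose body atoms all lie in `S`, also `H ∈ S`. -/
def IsModel {A : Type} (P : Set (A × List A)) (S : Set A) : Prop :=
  ∀ (H : A) (B : List A), (H, B) ∈ P → (∀ b ∈ B, b ∈ S) → H ∈ S

/-- The least Herbrand model of `P` (the least set of atoms closed
under all the clauses of `P`). -/
def LeastModel {A : Type} (P : Set (A × List A)) : Set A :=
  ⋂₀ { S : Set A | IsModel P S }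

/-- The ground instances of the four clauses of the program NQUEENS. -/
inductive NQClause : Atom × List Atom → Prop where
  | c1 (x y z : Term) :
      NQClause (Atom.pqs Term.zero x y z, [])
  | c2 (i cs us ds u d : Term) :
      NQClause (Atom.pqs (Term.succ i) cs us (Term.cons d ds),
        [Atom.pqs i cs (Term.cons u us) ds, Atom.pq (Term.succ i) cs us ds])
  | c3 (i c u d : Term) :
      NQClause (Atom.pq i (Term.cons i c) (Term.cons i u) (Term.cons i d), [])
  | c4 (i cs us ds c u d : Term) :
      NQClause (Atom.pq i (Term.cons c cs) (Term.cons u us) (Term.cons d ds),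
        [Atom.pq i cs us ds])

/-- The program NQUEENS as a set of ground clauses. -/
def NQUEENS : Set (Atom × List Atom) := { cl | NQClause cl }

/-- The ground instances of the two clauses defining `pq`. -/
inductive PQClause : Atom × List Atom → Prop where
  | c3 (i c u d : Term) :
      PQClause (Atom.pq i (Term.cons i c) (Term.cons i u) (Term.cons i d), [])
  | c4 (i cs us ds c u d : Term) :
      PQClause (Atom.pq i (Term.cons c cs) (Term.cons u us) (Term.cons d ds),
        [Atom.pq i cs us ds])

/-- The program defining `pq`, as a set of ground clauses. -/
def PQprog : Set (Atom × List Atom) := { cl | PQClause cl }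

/-- The specification `S_pq`. -/
def SpecPq : Set Atom :=
  { a | ∃ (i cs us ds : Term) (k : ℕ), 1 ≤ k ∧ a = Atom.pq i cs us ds ∧
        NthMember k i cs ∧ NthMember k i us ∧ NthMember k i ds }

/-- The specification `S_pqs` (for correctness). -/
def SpecPqs : Set Atom :=
  { a | ∃ cs us ds : Term, a = Atom.pqs Term.zero cs us ds } ∪
  { a | ∃ (i : ℕ) (cs us t ds : Term), 1 ≤ i ∧
        a = Atom.pqs (numeral i) cs us (Term.cons t ds) ∧
        (∀ j : ℕ, 1 ≤ j → j ≤ i → IsMember (numeral j) cs) ∧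
        (DistinctList cs → CorrectUpTo i i cs us ds) }

/-- The specification `S = S_pq ∪ S_pqs` (for correctness). -/
def Spec : Set Atom := SpecPq ∪ SpecPqs

/-- The specification `S⁰` (for completeness). -/
def Spec0 : Set Atom :=
  SpecPq ∪ { a | ∃ cs us ds : Term, a = Atom.pqs Term.zero cs us ds } ∪
  { a | ∃ (i : ℕ) (cs us t ds : Term), 1 ≤ i ∧
        a = Atom.pqs (numeral i) cs us (Term.cons t ds) ∧
        CorrectUpTo i i cs us ds }

/-- The size function on terms. -/
def tsize : Term → ℕ
  | Term.zero => 0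
  | Term.nil => 0
  | Term.succ t => 1 + tsize t
  | Term.cons _ t => 1 + tsize t

/-- The level mapping on ground atoms. -/
def level : Atom → ℕ
  | Atom.pq _ cs _ _ => tsize cs
  | Atom.pqs i cs _ _ => tsize i + tsize cs

lemma nth_pos {k : ℕ} {e t : Term} (h : NthMember k e t) : 1 ≤ k := by
  cases h <;> omega

lemma nth_cons_inv {k : ℕ} {e a t : Term} (h : NthMember k e (Term.cons a t)) :
    (k = 1 ∧ e = a) ∨ ∃ k', k = k' + 1 ∧ 1 ≤ k' ∧ NthMember k' e t := by
  cases h with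
  | head => exact Or.inl ⟨rfl, rfl⟩
  | tail _ h' => exact Or.inr ⟨_, rfl, nth_pos h', h'⟩

lemma nth_one {e t : Term} (h : NthMember 1 e t) : ∃ t', t = Term.cons e t' := by
  cases h with
  | head => exact ⟨_, rfl⟩
  | tail _ h' => exact absurd (nth_pos h') (by omega)

lemma nth_succ {k : ℕ} (hk : 1 ≤ k) {e t : Term} (h : NthMember (k + 1) e t) :
    ∃ a t', t = Term.cons a t' ∧ NthMember k e t' := by
  cases h with
  | head => exact absurd hk (by omega)
  | tail a h' => exact ⟨a, _, rfl, h'⟩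

lemma pq_mem {k : ℕ} {e cs us ds : Term} (h1 : NthMember k e cs)
    (h2 : NthMember k e us) (h3 : NthMember k e ds)
    {S : Set Atom} (hS : IsModel NQUEENS S) : Atom.pq e cs us ds ∈ S := by
  induction h1 generalizing us ds with
  | head e t' =>
    obtain ⟨u', rfl⟩ := nth_one h2
    obtain ⟨d', rfl⟩ := nth_one h3
    exact hS _ [] (NQClause.c3 e t' u' d') (by simp)
  | tail e₁ h' ih =>
    obtain ⟨u, us', rfl, h2'⟩ := nth_succ (nth_pos h') h2
    obtain ⟨d, ds', rfl, h3'⟩ := nth_succ (nth_pos h') h3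
    rename_i e t''
    refine hS _ [Atom.pq e t'' us' ds'] (NQClause.c4 e t'' us' ds' e₁ u d) ?_
    intro b hb
    simp only [List.mem_singleton] at hb
    subst hb
    exact ih h2' h3'

lemma key {n : ℕ} {cs us ds : Term} (h : CorrectUpTo n n cs us ds) :
    ∀ m, m ≤ n → ∀ Us Ds : Term,
    (∀ j k l : ℕ, 1 ≤ j → j ≤ m → NthMember k (numeral j) cs →
      (l : ℤ) = (k : ℤ) + j - m → 0 < l → NthMember l (numeral j) Us) →
    (∀ j k l : ℕ, 1 ≤ j → j ≤ m → NthMember k (numeral j) cs →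
      (l : ℤ) = (k : ℤ) + m + 1 - j → NthMember l (numeral j) Ds) →
    ∀ S : Set Atom, IsModel NQUEENS S → Atom.pqs (numeral m) cs Us Ds ∈ S := by
  obtain ⟨hnn, hdist, hmem, hup, hdown, hus, hds⟩ := h
  intro m
  induction m with
  | zero =>
    intro _ Us Ds _ _ S hS
    exact hS _ [] (NQClause.c1 cs Us Ds) (by simp)
  | succ m ih =>
    intro hmn Us Ds Hu Hd S hS
    obtain ⟨k, hk1, hk⟩ := hmem (m + 1) (by omega) (by omega)
    have hDk : NthMember (k + 1) (numeral (m + 1)) Ds :=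
      Hd (m + 1) k (k + 1) (by omega) le_rfl hk (by push_cast; ring)
    obtain ⟨D, Ds', rfl, hDs'⟩ := nth_succ hk1 hDk
    have hUk : NthMember k (numeral (m + 1)) Us :=
      Hu (m + 1) k k (by omega) le_rfl hk (by push_cast; ring) (by omega)
    have hU : ∃ U, ∀ j k' l : ℕ, 1 ≤ j → j ≤ m → NthMember k' (numeral j) cs →
        (l : ℤ) = (k' : ℤ) + j - m → 0 < l → NthMember l (numeral j) (Term.cons U Us) := by
      by_cases hex : ∃ j0 k0 : ℕ, 1 ≤ j0 ∧ j0 ≤ m ∧ NthMember k0 (numeral j0) cs ∧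
          k0 + j0 = m + 1
      · obtain ⟨j0, k0, hj01, hj0m, hm0, hsum⟩ := hex
        refine ⟨numeral j0, ?_⟩
        intro j k' l hj1 hjm hmemj hl hlpos
        rcases Nat.lt_or_ge 1 l with hl2 | hl1
        · have h' : NthMember (l - 1) (numeral j) Us :=
            Hu j k' (l - 1) hj1 (by omega) hmemj (by omega) (by omega)
          have h'' := NthMember.tail (numeral j0) h'
          simpa [Nat.sub_add_cancel (by omega : 1 ≤ l)] using h''
        · have hl1' : l = 1 := by omega
          subst hl1'
          have hjj : j = j0 := by
            by_contra hne
            exact hup j j0 k' k0 hj1 (by omega) hj01 (by omega) hne hmemj hm0 (by omega)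
          subst hjj
          have hkk : k' = k0 := by
            by_contra hne
            exact hdist.2 k' k0 _ _ hmemj hm0 hne rfl
          exact NthMember.head _ _
      · refine ⟨Term.zero, ?_⟩
        intro j k' l hj1 hjm hmemj hl hlpos
        have hl2 : 1 < l := by
          rcases Nat.lt_or_ge 1 l with h2 | h1
          · exact h2
          · have hl1' : l = 1 := by omega
            exact absurd ⟨j, k', hj1, hjm, hmemj, by omega⟩ hex
        have h' : NthMember (l - 1) (numeral j) Us :=
          Hu j k' (l - 1) hj1 (by omega) hmemj (by omega) (by omega)
        have h'' := NthMember.tail Term.zero h'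
        simpa [Nat.sub_add_cancel (by omega : 1 ≤ l)] using h''
    obtain ⟨U, hUspec⟩ := hU
    have hDspec : ∀ j k' l : ℕ, 1 ≤ j → j ≤ m → NthMember k' (numeral j) cs →
        (l : ℤ) = (k' : ℤ) + m + 1 - j → NthMember l (numeral j) Ds' := by
      intro j k' l hj1 hjm hmemj hl
      have hk'1 := nth_pos hmemj
      have h1 : NthMember (l + 1) (numeral j) (Term.cons D Ds') :=
        Hd j k' (l + 1) hj1 (by omega) hmemj (by push_cast; omega)
      rcases nth_cons_inv h1 with ⟨h', _⟩ | ⟨l', hl', _, h2⟩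
      · omega
      · have hll : l' = l := by omega
        subst hll
        exact h2
    have hbody1 : Atom.pqs (numeral m) cs (Term.cons U Us) Ds' ∈ S :=
      ih (by omega) _ _ hUspec hDspec S hS
    have hbody2 : Atom.pq (numeral (m + 1)) cs Us Ds' ∈ S :=
      pq_mem hk hUk hDs' hS
    refine hS _ _ (NQClause.c2 (numeral m) cs Us Ds' U D) ?_
    intro b hb
    simp only [List.mem_cons, List.mem_singleton] at hb
    rcases hb with rfl | rfl | h'
    · exact hbody1
    · exact hbody2
    · exact absurd h' (by simp)

/-- Every n-queens solution in the representation is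
computed by NQUEENS. -/
theorem solutions_are_computed (n : ℕ) (hn : 1 ≤ n) (cs us ds : Term)
    (h : CorrectUpTo n n cs us ds) :
    ∀ t : Term, Atom.pqs (numeral n) cs us (Term.cons t ds) ∈ LeastModel NQUEENS := by
  intro t
  refine Set.mem_sInter.mpr ?_
  intro S hS
  refine key h n le_rfl us (Term.cons t ds) ?_ ?_ S hS
  · intro j k l hj1 hjn hmemj hl hlpos
    exact h.2.2.2.2.2.1 j k l hj1 hjn hmemj hl hlpos
  · intro j k l hj1 hjn hmemj hl
    have hk1 := nth_pos hmemj
    have hl2 : 2 ≤ l := by omega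
    have h' : NthMember (l - 1) (numeral j) ds :=
      h.2.2.2.2.2.2 j k (l - 1) hj1 hjn hmemj (by omega) (by omega)
    have h'' := NthMember.tail t h'
    simpa [Nat.sub_add_cancel (by omega : 1 ≤ l)] using h''
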